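/- arXiv:1704.06037 — 3 statements merged into one kernel-verified Lean document; each statement's English description precedes it below -/
import Mathlib

section
/- Let ≻₀ and ≻₁ be strict total orders on a finite set A, let a, b ∈ A with a ≻₀ b and b ≻₁ a. Let w(≻₁) denote the strict total order obtained from ≻₁ by swapping the positions of a and b. Then d(≻₁, ≻₀) > d(w(≻₁), ≻₀), where d is the inversion distance. -/
open Classical

/-- Inversion distance between two preference relations: the number of (ordered
representatives of) unordered pairs ranked oppositely. For strict total orders,
each oppositely-ranked unordered pair {x,y} is counted exactly once. -/
noncomputable def invDist {A : Type*} [Fintype A] (r r' : A → A → Prop) : ℕ :=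
  {p : A × A | r p.1 p.2 ∧ r' p.2 p.1}.ncard

/-- Frequency of a preference in a profile (list of preferences). -/
noncomputable def freq {A : Type*} (π : List (A → A → Prop)) (r : A → A → Prop) : ℕ :=
  {i : Fin π.length | π.get i = r}.ncard

/-- Number of voters in the profile ranking `a` above `b`. -/
noncomputable def votesFor {A : Type*} (π : List (A → A → Prop)) (a b : A) : ℕ :=
  {i : Fin π.length | π.get i a b}.ncard

/-- The preference obtained by swapping alternatives `a` and `b` in the ranking. -/
def swapPref {A : Type*} [DecidableEq A] (a b : A) (r : A → A → Prop) : A → A → Prop :=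
  fun x y => r (Equiv.swap a b x) (Equiv.swap a b y)

/-! Let `S` and `S'` be the sets of ordered pairs inverted between `≻₀` and, respectively, `≻₁`
and its swap. Applying the transposition `(a b)` to both coordinates maps `S' \ S` injectively
into `S \ S'`, and `(b, a) ∈ S \ S'` is not hit, so `|S' \ S| < |S \ S'|`, i.e. `|S'| < |S|`. -/

open Function Set

theorem Set.ncard_lt_ncard_of_mapsTo_sdiff {α : Type*} {s t : Set α} {f : α → α} {z : α}
    (hf : InjOn f (s \ t)) (hmaps : MapsTo f (s \ t) ((t \ s) \ {z})) (hz : z ∈ t \ s)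
    (hs : s.Finite := by toFinite_tac) (ht : t.Finite := by toFinite_tac) :
    s.ncard < t.ncard := by
  rw [ncard_lt_ncard_iff_ncard_sdiff_lt_ncard_sdiff hs ht]
  calc (s \ t).ncard ≤ ((t \ s) \ {z}).ncard := ncard_le_ncard_of_injOn f hmaps hf ht.sdiff.sdiff
    _ < (t \ s).ncard := ncard_sdiff_singleton_lt_of_mem hz ht.sdiff

theorem swapPref_of_swapPref_of_not {A : Type*} [DecidableEq A] {r0 r1 : A → A → Prop}
    [IsStrictOrder A r0] [IsTrans A r1] {a b x y : A} (h0 : r0 a b) (h1 : r1 b a)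
    (hxy : swapPref a b r1 x y) (hnxy : ¬ r1 x y) (hyx : r0 y x) : swapPref a b r0 y x := by
  have trans0 : ∀ {u v w}, r0 u v → r0 v w → r0 u w := trans_of r0
  have trans1 : ∀ {u v w}, r1 u v → r1 v w → r1 u w := trans_of r1
  have irrefl0 : ∀ u, ¬ r0 u u := irrefl_of r0
  -- Only `(x, y) = (a, c)` or `(c, b)` with `c ∉ {a, b}` is consistent with the hypotheses;
  -- there `r0 y x` and `r0 a b` chain by transitivity.
  simp only [swapPref, Equiv.swap_apply_def] at *
  split_ifs at hxy ⊢ <;> subst_vars <;> grind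

theorem invDist_swap_lt_general {A : Type*} [Fintype A] [DecidableEq A]
    (r0 r1 : A → A → Prop) (hr0 : IsStrictTotalOrder A r0) (hr1 : IsStrictTotalOrder A r1)
    (a b : A) (h0 : r0 a b) (h1 : r1 b a) :
    invDist (swapPref a b r1) r0 < invDist r1 r0 := by
  set σ := Equiv.swap a b
  refine ncard_lt_ncard_of_mapsTo_sdiff (f := Prod.map σ σ) (z := (b, a))
    (σ.injective.prodMap σ.injective).injOn ?_ ⟨⟨h1, h0⟩, ?_⟩
  · rintro ⟨x, y⟩ ⟨⟨hxy, hyx⟩, hnew⟩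
    have hnxy : ¬ r1 x y := fun h => hnew ⟨h, hyx⟩
    refine ⟨⟨⟨hxy, swapPref_of_swapPref_of_not h0 h1 hxy hnxy hyx⟩, ?_⟩, ?_⟩
    · rintro ⟨h, -⟩
      exact hnxy (by simpa [σ, swapPref] using h)
    · intro h
      obtain ⟨rfl, rfl⟩ : x = a ∧ y = b := by simpa [σ, Equiv.swap_apply_eq_iff] using h
      exact asymm h0 hyx
  · rintro ⟨h, -⟩
    exact asymm h1 (by simpa [swapPref] using h)

/-- If `a ≻₀ b` and `b ≻₁ a`, then swapping `a` and `b` in `≻₁` strictly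
decreases the inversion distance to `≻₀`. -/
theorem invDist_swap_lt {A : Type*} [Fintype A] [DecidableEq A]
    (r0 r1 : A → A → Prop) (hr0 : IsStrictTotalOrder A r0) (hr1 : IsStrictTotalOrder A r1)
    (a b : A) (hab : a ≠ b) (h0 : r0 a b) (h1 : r1 b a) :
    invDist (swapPref a b r1) r0 < invDist r1 r0 :=
  invDist_swap_lt_general r0 r1 hr0 hr1 a b h0 h1
end

section
/- Let π be a preference profile on a finite set A of alternatives and let ≻₀ be a preference such that Flexible Condition 1 holds: for all preferences ≻', ≻, if μ_π(≻') > μ_π(≻) then d(≻', ≻₀) ≤ d(≻, ≻₀). Then for any two alternatives a, b with a ≻₀ b, alternative a weakly beats b in the majority relation: the number of voters in π preferring a to b is at least the number preferring b to a. -/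
open Classical

/-!
Write `σ` for the transposition of `a` and `b` and let `s` be a ranking with `b` above `a`, while
`a ≻₀ b`. Then `d(s ∘ σ, ≻₀) = d(s, ≻₀ ∘ σ) < d(s, ≻₀)`: `σ` maps the pairs that are inversions of
`s` against `≻₀ ∘ σ` but not against `≻₀` injectively to pairs that are inversions against `≻₀` but
not against `≻₀ ∘ σ`, and none of them to the inversion `(b, a)`. Flexible Condition 1 therefore gives
`μ(s) ≤ μ(s ∘ σ)`; summing over the rankings with `b ≻ a`, which `s ↦ s ∘ σ` maps bijectively onto
those with `a ≻ b`, gives the claim.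
-/

section
variable {A : Type*}

lemma swapPref_swapPref [DecidableEq A] (a b : A) (r : A → A → Prop) :
    swapPref a b (swapPref a b r) = r := by
  funext x y
  simp [swapPref]

instance [DecidableEq A] (a b : A) (r : A → A → Prop) [IsStrictTotalOrder A r] :
    IsStrictTotalOrder A (swapPref a b r) where
  trichotomous _ _ hxy hyx :=
    (Equiv.swap a b).injective <| ((trichotomous_of r _ _).resolve_left hxy).resolve_right hyx
  irrefl _ := irrefl_of r _
  trans _ _ _ := trans_of r

lemma swapPref_of_new_inversion [DecidableEq A] {r r0 : A → A → Prop}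
    [IsStrictTotalOrder A r] [IsStrictTotalOrder A r0] {a b u v : A}
    (hab : r0 a b) (hba : r b a) (huv : r u v) (hvu : swapPref a b r0 v u) (hvu' : ¬ r0 v u) :
    swapPref a b r u v := by
  have huv0 : r0 u v := (trichotomous_of r0 u v).resolve_right fun h =>
    h.elim (fun h => irrefl_of r u (h ▸ huv)) hvu'
  unfold swapPref at *
  by_cases hua : u = a
  · subst u
    have hvb : v ≠ b := fun h => asymm_of r hba (h ▸ huv)
    have hva : v ≠ a := fun h => irrefl_of r a (h ▸ huv)
    rw [Equiv.swap_apply_left, Equiv.swap_apply_of_ne_of_ne hva hvb]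
    exact trans_of r hba huv
  by_cases hub : u = b
  · subst u
    exfalso
    by_cases hva : v = a
    · subst v
      exact asymm_of r0 hab huv0
    have hvb : v ≠ b := fun h => irrefl_of r b (h ▸ huv)
    rw [Equiv.swap_apply_of_ne_of_ne hva hvb, Equiv.swap_apply_right] at hvu
    exact asymm_of r0 hab (trans_of r0 huv0 hvu)
  rw [Equiv.swap_apply_of_ne_of_ne hua hub] at hvu ⊢
  by_cases hva : v = a
  · subst v
    rw [Equiv.swap_apply_left] at hvu
    exact absurd (trans_of r0 hvu huv0) (asymm_of r0 hab)
  by_cases hvb : v = b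
  · subst v
    rw [Equiv.swap_apply_right]
    exact trans_of r huv hba
  rw [Equiv.swap_apply_of_ne_of_ne hva hvb] at hvu
  exact absurd hvu hvu'

lemma invDist_comp_equiv [Fintype A] (σ : A ≃ A) (r r0 : A → A → Prop) :
    invDist (fun x y => r (σ x) (σ y)) (fun x y => r0 (σ x) (σ y)) = invDist r r0 :=
  Set.ncard_preimage_of_injective_subset_range (s := {p : A × A | r p.1 p.2 ∧ r0 p.2 p.1})
    (σ.prodCongr σ).injective fun p _ => (σ.prodCongr σ).surjective p

lemma invDist_swapPref_left [Fintype A] [DecidableEq A] (a b : A) (r r0 : A → A → Prop) :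
    invDist (swapPref a b r) r0 = invDist r (swapPref a b r0) := by
  conv_lhs => rw [← swapPref_swapPref a b r0]
  exact invDist_comp_equiv (Equiv.swap a b) r (swapPref a b r0)

lemma invDist_swapPref_right_lt [Fintype A] [DecidableEq A] {r r0 : A → A → Prop}
    [IsStrictTotalOrder A r] [IsStrictTotalOrder A r0] {a b : A} (hab : r0 a b) (hba : r b a) :
    invDist r (swapPref a b r0) < invDist r r0 := by
  set σ := (Equiv.swap a b).prodCongr (Equiv.swap a b)
  set E : Set (A × A) := {p | r p.1 p.2 ∧ swapPref a b r0 p.2 p.1}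
  set D : Set (A × A) := {p | r p.1 p.2 ∧ r0 p.2 p.1}
  have hmaps : ∀ p ∈ E \ D, σ p ∈ (D \ E) \ {(b, a)} := by
    rintro ⟨u, v⟩ ⟨⟨huv, hvu⟩, hnot⟩
    have hvu' : ¬ r0 v u := fun h => hnot ⟨huv, h⟩
    refine ⟨⟨⟨swapPref_of_new_inversion hab hba huv hvu hvu', hvu⟩, ?_⟩, ?_⟩
    · simpa [E, σ, swapPref] using fun _ => hvu'
    · intro h
      obtain ⟨rfl, rfl⟩ : u = a ∧ v = b := by simpa [σ, Equiv.swap_apply_eq_iff] using h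
      exact asymm_of r hba huv
  have hinj : Set.InjOn σ (E \ D) := σ.injective.injOn
  rw [invDist, invDist, Set.ncard_lt_ncard_iff_ncard_sdiff_lt_ncard_sdiff]
  calc (E \ D).ncard ≤ ((D \ E) \ {(b, a)}).ncard := Set.ncard_le_ncard_of_injOn σ hmaps hinj
    _ < (D \ E).ncard := Set.ncard_sdiff_singleton_lt_of_mem
        ⟨⟨hba, hab⟩, fun h => asymm_of r0 hab (by simpa [E, swapPref] using h.2)⟩

lemma invDist_swapPref_lt [Fintype A] [DecidableEq A] {r r0 : A → A → Prop}
    [IsStrictTotalOrder A r] [IsStrictTotalOrder A r0] {a b : A} (hab : r0 a b) (hba : r b a) :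
    invDist (swapPref a b r) r0 < invDist r r0 :=
  invDist_swapPref_left a b r r0 ▸ invDist_swapPref_right_lt hab hba

lemma ncard_setOf_get_eq_sum_freq [Fintype A] [DecidableEq A] (π : List (A → A → Prop))
    (P : (A → A → Prop) → Prop) :
    {i : Fin π.length | P (π.get i)}.ncard = ∑ s : A → A → Prop with P s, freq π s := by
  rw [Set.ncard_eq_toFinset_card', Finset.card_eq_sum_card_fiberwise (f := π.get) (t := {s | P s})]
  · refine Finset.sum_congr rfl fun s hs => ?_
    rw [freq, Set.ncard_eq_toFinset_card']
    congr 1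
    ext i
    simp only [Finset.mem_filter, Finset.mem_univ, true_and, List.get_eq_getElem,
      Set.toFinset_ofPred, and_iff_right_iff_imp]
    exact fun h => h ▸ (Finset.mem_filter.1 hs).2
  · intro i hi
    simpa using hi

lemma freq_le_freq_swapPref [Fintype A] [DecidableEq A] {π : List (A → A → Prop)}
    (hπ : ∀ r ∈ π, IsStrictTotalOrder A r) {r0 : A → A → Prop} [IsStrictTotalOrder A r0]
    (hflex : ∀ r' r : A → A → Prop, IsStrictTotalOrder A r' → IsStrictTotalOrder A r →
      freq π r' > freq π r → invDist r' r0 ≤ invDist r r0)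
    {a b : A} (hab : r0 a b) {s : A → A → Prop} (hs : s b a) :
    freq π s ≤ freq π (swapPref a b s) := by
  by_contra! hlt
  obtain ⟨i, rfl⟩ := Set.nonempty_of_ncard_ne_zero (Nat.ne_zero_of_lt hlt)
  have := hπ _ (List.get_mem π i)
  exact (hflex _ _ inferInstance inferInstance hlt).not_gt (invDist_swapPref_lt hab hs)

end

theorem flexible_implies_weak_majority_general {A : Type*} [Fintype A]
    (π : List (A → A → Prop)) (hπ : ∀ r ∈ π, IsStrictTotalOrder A r)
    (r0 : A → A → Prop) (hr0 : IsStrictTotalOrder A r0)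
    (hflex : ∀ r' r : A → A → Prop, IsStrictTotalOrder A r' → IsStrictTotalOrder A r →
      freq π r' > freq π r → invDist r' r0 ≤ invDist r r0)
    (a b : A) (hab : r0 a b) :
    votesFor π b a ≤ votesFor π a b :=
  calc votesFor π b a = ∑ s : A → A → Prop with s b a, freq π s :=
        ncard_setOf_get_eq_sum_freq π fun s => s b a
    _ ≤ ∑ s : A → A → Prop with s b a, freq π (swapPref a b s) :=
        Finset.sum_le_sum fun s hs => freq_le_freq_swapPref hπ hflex hab (Finset.mem_filter.1 hs).2
    _ = ∑ s : A → A → Prop with s a b, freq π s :=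
        Finset.sum_nbij' (swapPref a b) (swapPref a b) (by simp [swapPref])
          (by simp [swapPref]) (by simp [swapPref_swapPref]) (by simp [swapPref_swapPref])
          fun _ _ => rfl
    _ = votesFor π a b := (ncard_setOf_get_eq_sum_freq π fun s => s a b).symm

/-- Flexible Condition 1 implies weak majority agreement with `≻₀`: if
`a ≻₀ b` then at least as many voters prefer `a` to `b` as `b` to `a`. -/
theorem flexible_implies_weak_majority {A : Type*} [Fintype A]
    (hK : 3 ≤ Fintype.card A)
    (π : List (A → A → Prop)) (hπ : ∀ r ∈ π, IsStrictTotalOrder A r)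
    (r0 : A → A → Prop) (hr0 : IsStrictTotalOrder A r0)
    (hflex : ∀ r' r : A → A → Prop, IsStrictTotalOrder A r' → IsStrictTotalOrder A r →
      freq π r' > freq π r → invDist r' r0 ≤ invDist r r0)
    (a b : A) (hab : r0 a b) :
    votesFor π b a ≤ votesFor π a b :=
  flexible_implies_weak_majority_general π hπ r0 hr0 hflex a b hab
end

section
/- Let π be a profile and ≻₀ a preference satisfying Flexible Condition 1. Then the top-ranked alternative of ≻₀ receives a maximal total score under every scoring rule: for every weakly decreasing score vector S and every alternative b, the total score of Best(≻₀) is at least the total score of b. -/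
open Classical

/-- The (0-based) rank of alternative `x` in preference `r`: the number of
alternatives ranked strictly above it. The top alternative has rank 0. -/
noncomputable def rank {A : Type*} (r : A → A → Prop) (x : A) : ℕ :=
  {y | r y x}.ncard

/-- Total score of alternative `x` in profile `π` under a scoring vector `S`
(`S j` is the score of the alternative with `j` alternatives above it). -/
noncomputable def totalScore {A : Type*} (π : List (A → A → Prop)) (S : ℕ → ℝ) (x : A) : ℝ :=
  ∑ i : Fin π.length, S (rank (π.get i) x)

/-!
Pair every ranking `r` with the ranking `r'` obtained by swapping `best` and `b`. If `r` puts
`best` above `b`, then `r'` is strictly farther from `≻₀`: since `best` tops `≻₀`, the swap adds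
the inversion `{best, b}` and every inversion it removes is traded for a new one. Flexible
Condition 1 then gives `μ(r') ≤ μ(r)`. The score gap `S(rank best) - S(rank b)` changes sign
under the swap, so twice the total gap is `∑ r, (μ(r) - μ(r')) * gap(r)`, a sum of nonnegative
terms.
-/

section Swap

variable {A : Type*} [DecidableEq A]

theorem swapPref_involutive (a b : A) : Function.Involutive (swapPref a b) := by
  intro r
  funext x y
  simp [swapPref]

theorem isStrictTotalOrder_swapPref (a b : A) {r : A → A → Prop} [IsStrictTotalOrder A r] :
    IsStrictTotalOrder A (swapPref a b r) :=
  (RelEmbedding.preimage (Equiv.swap a b).toEmbedding r).isStrictTotalOrder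

theorem rank_swapPref [Fintype A] (a b : A) (r : A → A → Prop) (x : A) :
    rank (swapPref a b r) x = rank r (Equiv.swap a b x) :=
  Set.ncard_preimage_of_injective_subset_range (s := {y | r y (Equiv.swap a b x)})
    (Equiv.injective _) (by simp)

end Swap

theorem rank_lt_rank {A : Type*} [Finite A] {r : A → A → Prop} [IsTrans A r] [Std.Irrefl r]
    {x y : A} (hxy : r x y) : rank r x < rank r y :=
  Set.ncard_lt_ncard ⟨fun _ hz => _root_.trans hz hxy, fun hsub => irrefl x (hsub hxy)⟩

theorem invDist_lt_invDist_swapPref {A : Type*} [Fintype A] [DecidableEq A]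
    {r r0 : A → A → Prop} [IsStrictTotalOrder A r] [Std.Asymm r0] {a b : A}
    (ha : ∀ y, y ≠ a → r0 a y) (hab : r a b) :
    invDist r r0 < invDist (swapPref a b r) r0 := by
  have hba : b ≠ a := fun h => irrefl a (h ▸ hab)
  have htrans : ∀ x y z, r x y → r y z → r x z := fun _ _ _ => _root_.trans
  have hasymm : ∀ x y, r x y → ¬ r y x := fun _ _ => asymm
  have htri : ∀ x y, r x y ∨ x = y ∨ r y x := trichotomous
  have hasymm0 : ∀ x y, r0 x y → ¬ r0 y x := fun _ _ => asymm
  set D : Set (A × A) := {p | r p.1 p.2 ∧ r0 p.2 p.1}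
  set D' : Set (A × A) := {p | swapPref a b r p.1 p.2 ∧ r0 p.2 p.1}
  -- The only inversions the swap removes are the `(z, b)` with `a ≻ z ≻ b`; send them to the
  -- new inversions `(z, a)`.
  set f : A × A → A × A := fun p => if p.2 = b ∧ r a p.1 then (p.1, a) else p
  have hmaps : ∀ p ∈ D, f p ∈ D' \ {(b, a)} := by
    rintro ⟨x, y⟩ ⟨hxy, hyx⟩
    simp only [f, D', swapPref, Equiv.swap_apply_def, Set.mem_sdiff, Set.mem_ofPred_eq,
      Set.mem_singleton_iff]
    grind
  have hinj : Set.InjOn f D := by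
    rintro ⟨x, y⟩ ⟨hxy, -⟩ ⟨x', y'⟩ ⟨hxy', -⟩ heq
    simp only [f] at heq
    grind
  calc invDist r r0 ≤ (D' \ {(b, a)}).ncard := Set.ncard_le_ncard_of_injOn f hmaps hinj
    _ < invDist (swapPref a b r) r0 :=
      Set.ncard_sdiff_singleton_lt_of_mem ⟨by simpa [swapPref], ha b hba⟩

theorem freq_eq_zero_of_notMem {A : Type*} {π : List (A → A → Prop)} {r : A → A → Prop}
    (h : r ∉ π) : freq π r = 0 :=
  (Set.ncard_eq_zero).2 <| Set.eq_empty_of_forall_notMem fun i hi => h (hi ▸ π.get_mem i)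

theorem sum_get_eq_sum_freq_mul {A : Type*} [Fintype A] [DecidableEq A]
    (π : List (A → A → Prop)) (h : (A → A → Prop) → ℝ) :
    ∑ i : Fin π.length, h (π.get i) = ∑ r, (freq π r : ℝ) * h r := by
  rw [← Finset.sum_fiberwise' Finset.univ π.get h]
  refine Finset.sum_congr rfl fun r _ => ?_
  rw [Finset.sum_const, nsmul_eq_mul, freq, ← Set.ncard_coe_finset]
  simp

theorem Function.Involutive.two_mul_sum_mul_eq {α : Type*} [Fintype α] {σ : α → α}
    (hσ : σ.Involutive) (w g : α → ℝ) (hg : ∀ x, g (σ x) = -g x) :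
    2 * ∑ x, w x * g x = ∑ x, (w x - w (σ x)) * g x := by
  have hswap : ∑ x, w (σ x) * g x = -∑ x, w x * g x := by
    rw [← Equiv.sum_comp (hσ.toPerm σ)]
    simp [hσ _, hg, Finset.sum_neg_distrib]
  simp only [sub_mul, Finset.sum_sub_distrib, hswap]
  ring

def FlexibleCondition {A : Type*} [Fintype A] (π : List (A → A → Prop))
    (r0 : A → A → Prop) : Prop :=
  ∀ r' r : A → A → Prop, IsStrictTotalOrder A r' → IsStrictTotalOrder A r →
    freq π r' > freq π r → invDist r' r0 ≤ invDist r r0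

section FlexibleCondition

variable {A : Type*} [Fintype A] [DecidableEq A] {π : List (A → A → Prop)}
  {r0 : A → A → Prop} [Std.Asymm r0] {best b : A}

theorem FlexibleCondition.freq_swapPref_le (hflex : FlexibleCondition π r0)
    (hbest : ∀ y, y ≠ best → r0 best y)
    {r : A → A → Prop} [IsStrictTotalOrder A r] (hr : r best b) :
    freq π (swapPref best b r) ≤ freq π r :=
  not_lt.1 fun hlt => (hflex _ _ (isStrictTotalOrder_swapPref best b) ‹_› hlt).not_gt
    (invDist_lt_invDist_swapPref hbest hr)

theorem freq_sub_freq_swapPref_mul_nonneg (hπ : ∀ r ∈ π, IsStrictTotalOrder A r)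
    (hflex : FlexibleCondition π r0) (hbest : ∀ y, y ≠ best → r0 best y) (hb : b ≠ best)
    {S : ℕ → ℝ} (hS : Antitone S) (r : A → A → Prop) :
    0 ≤ ((freq π r : ℝ) - freq π (swapPref best b r)) * (S (rank r best) - S (rank r b)) := by
  by_cases hr : IsStrictTotalOrder A r
  · rcases trichotomous_of r best b with h | h | h
    · exact mul_nonneg (sub_nonneg.2 (Nat.cast_le.2 (hflex.freq_swapPref_le hbest h)))
        (sub_nonneg.2 (hS (rank_lt_rank h).le))
    · exact absurd h.symm hb
    · have := isStrictTotalOrder_swapPref best b (r := r)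
      have h' := hflex.freq_swapPref_le hbest (b := b) (r := swapPref best b r)
        (by simpa [swapPref] using h)
      rw [swapPref_involutive] at h'
      exact mul_nonneg_of_nonpos_of_nonpos (sub_nonpos.2 (Nat.cast_le.2 h'))
        (sub_nonpos.2 (hS (rank_lt_rank h).le))
  · have hσr : ¬ IsStrictTotalOrder A (swapPref best b r) := fun h =>
      hr (swapPref_involutive best b r ▸ isStrictTotalOrder_swapPref best b)
    rw [freq_eq_zero_of_notMem (mt (hπ r) hr), freq_eq_zero_of_notMem (mt (hπ _) hσr)]
    simp

end FlexibleCondition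

theorem flexible_best_scoring_general {A : Type*} [Fintype A]
    (π : List (A → A → Prop)) (hπ : ∀ r ∈ π, IsStrictTotalOrder A r)
    (r0 : A → A → Prop) (hr0 : IsStrictTotalOrder A r0)
    (hflex : ∀ r' r : A → A → Prop, IsStrictTotalOrder A r' → IsStrictTotalOrder A r →
      freq π r' > freq π r → invDist r' r0 ≤ invDist r r0)
    (best : A) (hbest : ∀ y : A, y ≠ best → r0 best y)
    (S : ℕ → ℝ) (hS : Antitone S) :
    ∀ b : A, totalScore π S b ≤ totalScore π S best := by
  intro b
  rcases eq_or_ne b best with rfl | hb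
  · exact le_rfl
  have hgap : totalScore π S best - totalScore π S b =
      ∑ r, (freq π r : ℝ) * (S (rank r best) - S (rank r b)) := by
    rw [totalScore, totalScore, ← Finset.sum_sub_distrib]
    exact sum_get_eq_sum_freq_mul π fun r => S (rank r best) - S (rank r b)
  have hpair := (swapPref_involutive best b).two_mul_sum_mul_eq (fun r => (freq π r : ℝ))
    (fun r => S (rank r best) - S (rank r b)) fun r => by simp [rank_swapPref]
  have hterms := Finset.sum_nonneg fun r (_ : r ∈ Finset.univ) =>
    freq_sub_freq_swapPref_mul_nonneg hπ hflex hbest hb hS r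
  linarith

/-- Under Flexible Condition 1, the top-ranked alternative of `≻₀` receives a
maximal total score under every scoring rule. -/
theorem flexible_best_scoring {A : Type*} [Fintype A]
    (hK : 3 ≤ Fintype.card A)
    (π : List (A → A → Prop)) (hπ : ∀ r ∈ π, IsStrictTotalOrder A r)
    (r0 : A → A → Prop) (hr0 : IsStrictTotalOrder A r0)
    (hflex : ∀ r' r : A → A → Prop, IsStrictTotalOrder A r' → IsStrictTotalOrder A r →
      freq π r' > freq π r → invDist r' r0 ≤ invDist r r0)
    (best : A) (hbest : ∀ y : A, y ≠ best → r0 best y)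
    (S : ℕ → ℝ) (hS : Antitone S) :
    ∀ b : A, totalScore π S b ≤ totalScore π S best :=
  flexible_best_scoring_general π hπ r0 hr0 hflex best hbest S hS
end
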